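/- arXiv:1704.04922 — 2 statements merged into one kernel-verified Lean document; each statement's English description precedes it below -/
import Mathlib

section
/- Let u₁,…,u_m, v₁,…,v_n be unit vectors in a real or complex inner product space and let Φ be an m × n complex matrix. Then |∑_{x,y} Φ_{x,y} ⟨u_x, v_y⟩| ≤ √(m·n) · ‖Φ‖, where ‖Φ‖ is the operator (spectral) norm of Φ. -/
/-!
Let `w_x = ∑_y Φ_{x,y} v_y`. Cauchy–Schwarz in `E` bounds the sum by `∑_x ‖w_x‖`, and Cauchy–Schwarz
over `x` bounds that by `√m · (∑_x ‖w_x‖²)^{1/2}`. Expanding the `v_y` in an orthonormal basis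
`(b_i)` of their span, `∑_x ‖w_x‖² = ∑_i ‖Φ c_i‖²` with `c_i = (⟨b_i, v_y⟩)_y`, which is at most
`‖Φ‖² ∑_i ‖c_i‖² = ‖Φ‖² ∑_y ‖v_y‖² = ‖Φ‖² n`: the operator `I ⊗ Φ` has norm `‖Φ‖`.
-/

/-- The spectral (operator) norm of a matrix, as the operator norm of the induced linear map
between Euclidean spaces. -/
noncomputable def specNorm {𝕜 : Type*} [RCLike 𝕜] {m n : Type*} [Fintype m] [Fintype n]
    [DecidableEq n] (Φ : Matrix m n 𝕜) : ℝ :=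
  ‖LinearMap.toContinuousLinearMap (Matrix.toEuclideanLin Φ)‖

open scoped InnerProductSpace Matrix

section

variable {𝕜 : Type*} [RCLike 𝕜] {m n : Type*} [Fintype m] [Fintype n] [DecidableEq n]

lemma specNorm_nonneg (Φ : Matrix m n 𝕜) : 0 ≤ specNorm Φ := norm_nonneg _

lemma sum_norm_sq_mulVec_le (Φ : Matrix m n 𝕜) (c : n → 𝕜) :
    ∑ x, ‖(Φ *ᵥ c) x‖ ^ 2 ≤ specNorm Φ ^ 2 * ∑ y, ‖c y‖ ^ 2 := by
  have h := (LinearMap.toContinuousLinearMap (Matrix.toEuclideanLin Φ)).le_opNorm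
    (WithLp.toLp 2 c)
  have h2 := pow_le_pow_left₀ (norm_nonneg _) h 2
  rwa [mul_pow, EuclideanSpace.norm_sq_eq, EuclideanSpace.norm_sq_eq] at h2

lemma sum_norm_sq_sum_smul_le_of_finiteDimensional {F : Type*} [NormedAddCommGroup F]
    [InnerProductSpace 𝕜 F] [FiniteDimensional 𝕜 F] (Φ : Matrix m n 𝕜) (v : n → F) :
    ∑ x, ‖∑ y, Φ x y • v y‖ ^ 2 ≤ specNorm Φ ^ 2 * ∑ y, ‖v y‖ ^ 2 := by
  let b := stdOrthonormalBasis 𝕜 F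
  have hcoord : ∀ x i, ⟪b i, ∑ y, Φ x y • v y⟫_𝕜 = (Φ *ᵥ fun y => ⟪b i, v y⟫_𝕜) x := by
    intro x i
    simp [inner_sum, inner_smul_right, Matrix.mulVec, dotProduct]
  calc ∑ x, ‖∑ y, Φ x y • v y‖ ^ 2
      = ∑ i, ∑ x, ‖(Φ *ᵥ fun y => ⟪b i, v y⟫_𝕜) x‖ ^ 2 := by
        simp_rw [← b.sum_sq_norm_inner_right, hcoord]
        exact Finset.sum_comm
    _ ≤ ∑ i, specNorm Φ ^ 2 * ∑ y, ‖⟪b i, v y⟫_𝕜‖ ^ 2 :=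
        Finset.sum_le_sum fun i _ => sum_norm_sq_mulVec_le Φ _
    _ = specNorm Φ ^ 2 * ∑ y, ‖v y‖ ^ 2 := by
        rw [← Finset.mul_sum, Finset.sum_comm]
        simp_rw [b.sum_sq_norm_inner_right]

lemma sum_norm_sq_sum_smul_le {E : Type*} [NormedAddCommGroup E] [InnerProductSpace 𝕜 E]
    (Φ : Matrix m n 𝕜) (v : n → E) :
    ∑ x, ‖∑ y, Φ x y • v y‖ ^ 2 ≤ specNorm Φ ^ 2 * ∑ y, ‖v y‖ ^ 2 := by
  let K := Submodule.span 𝕜 (Set.range v)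
  have : FiniteDimensional 𝕜 K := FiniteDimensional.span_of_finite 𝕜 (Set.finite_range v)
  let w : n → K := fun y => ⟨v y, Submodule.subset_span (Set.mem_range_self y)⟩
  simpa [← Submodule.norm_coe, w] using sum_norm_sq_sum_smul_le_of_finiteDimensional Φ w

end

lemma sum_le_sqrt_card_mul_of_sum_sq_le {ι : Type*} [Fintype ι] (a : ι → ℝ) {C : ℝ}
    (h : ∑ i, a i ^ 2 ≤ C) : ∑ i, a i ≤ √(Fintype.card ι * C) := by
  have hcs := sq_sum_le_card_mul_sum_sq (s := Finset.univ) (f := a)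
  rw [Finset.card_univ] at hcs
  exact Real.le_sqrt_of_sq_le (hcs.trans (by gcongr))

/-- For unit vectors `u₁,…,u_m`, `v₁,…,v_n` in an inner product space and an `m × n`
complex matrix `Φ`, one has `|∑_{x,y} Φ_{x,y} ⟨u_x, v_y⟩| ≤ √(m·n)·‖Φ‖`. -/
theorem stmt8 {E : Type*} [NormedAddCommGroup E] [InnerProductSpace ℂ E]
    {m n : ℕ} (u : Fin m → E) (v : Fin n → E)
    (hu : ∀ x, ‖u x‖ = 1) (hv : ∀ y, ‖v y‖ = 1)
    (Φ : Matrix (Fin m) (Fin n) ℂ) :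
    ‖∑ x, ∑ y, Φ x y * (inner ℂ (u x) (v y) : ℂ)‖ ≤
      Real.sqrt ((m : ℝ) * n) * specNorm Φ := by
  let w : Fin m → E := fun x => ∑ y, Φ x y • v y
  have hw : ∑ x, ‖w x‖ ^ 2 ≤ specNorm Φ ^ 2 * n := by
    simpa [hv] using sum_norm_sq_sum_smul_le Φ v
  calc ‖∑ x, ∑ y, Φ x y * ⟪u x, v y⟫_ℂ‖ = ‖∑ x, ⟪u x, w x⟫_ℂ‖ := by
        simp [w]
    _ ≤ ∑ x, ‖w x‖ := norm_sum_le_of_le _ fun x _ => by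
        simpa [hu] using norm_inner_le_norm (𝕜 := ℂ) (u x) (w x)
    _ ≤ √(m * (specNorm Φ ^ 2 * n)) := by
        simpa using sum_le_sqrt_card_mul_of_sum_sq_le (fun x => ‖w x‖) hw
    _ = √(m * n) * specNorm Φ := by
        rw [show (m : ℝ) * (specNorm Φ ^ 2 * n) = m * n * specNorm Φ ^ 2 by ring,
          Real.sqrt_mul (by positivity),
          Real.sqrt_sq (specNorm_nonneg Φ)]
end

section
/- Tripartite spectral-norm bound setup: let H be a (finite-dimensional) complex inner product space, ψ ∈ H a unit vector, and for each x ∈ X, y ∈ Y, z ∈ Z let A_x, B_y, C_z be operators on factors of H = H_A ⊗ H_B ⊗ H_C with operator norm ≤ 1. Let Φ be a complex matrix indexed by X × (Y × Z) with entries Φ_{x,(y,z)}. Then |∑_{x,y,z} Φ_{x,(y,z)} ⟨ψ, (A_x ⊗ B_y ⊗ C_z) ψ⟩| ≤ √(|X||Y||Z|) · ‖Φ‖. -/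
/-!
Put `u x = ((A x)ᴴ ⊗ 1 ⊗ 1) ψ` and `v (y, z) = (1 ⊗ B y ⊗ C z) ψ`: all these vectors have norm at
most `1`, and the summand at `(x, y, z)` is `Φ x (y, z) * ⟪u x, v (y, z)⟫`. Stacking the two
families into `α (x, k) = u x k` and `β (p, k) = v p k` turns the sum into `⟪α, (Φ ⊗ 1) β⟫`, which
is at most `‖Φ‖ ‖α‖ ‖β‖ ≤ ‖Φ‖ √|X| √(|Y||Z|)`. That `M ⊗ 1` and `1 ⊗ N` are no larger in norm
than `M` and `N` follows by slicing a vector on a product index into its columns or rows.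
-/

open Kronecker

open scoped Matrix.Norms.L2Operator

lemma sum_norm_sq_le_card {ι E : Type*} [Fintype ι] [SeminormedAddCommGroup E] {w : ι → E}
    (hw : ∀ i, ‖w i‖ ≤ 1) : ∑ i, ‖w i‖ ^ 2 ≤ Fintype.card ι :=
  calc ∑ i, ‖w i‖ ^ 2 ≤ ∑ _i : ι, (1 : ℝ) :=
        Finset.sum_le_sum fun i _ => pow_le_one₀ (norm_nonneg (w i)) (hw i)
    _ = Fintype.card ι := by simp

namespace EuclideanSpace

variable {𝕜 m n : Type*} [RCLike 𝕜]

def row (w : EuclideanSpace 𝕜 (m × n)) (i : m) : EuclideanSpace 𝕜 n :=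
  WithLp.toLp 2 fun k => w (i, k)

def col (w : EuclideanSpace 𝕜 (m × n)) (k : n) : EuclideanSpace 𝕜 m :=
  WithLp.toLp 2 fun i => w (i, k)

def ofRows (u : m → EuclideanSpace 𝕜 n) : EuclideanSpace 𝕜 (m × n) :=
  WithLp.toLp 2 fun p => u p.1 p.2

variable [Fintype m] [Fintype n]

lemma norm_sq_eq_sum_norm_sq_row (w : EuclideanSpace 𝕜 (m × n)) :
    ‖w‖ ^ 2 = ∑ i, ‖w.row i‖ ^ 2 := by
  simp only [norm_sq_eq, Fintype.sum_prod_type, row]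

lemma norm_sq_eq_sum_norm_sq_col (w : EuclideanSpace 𝕜 (m × n)) :
    ‖w‖ ^ 2 = ∑ k, ‖w.col k‖ ^ 2 := by
  simp only [norm_sq_eq, Fintype.sum_prod_type_right, col]

lemma norm_ofRows (u : m → EuclideanSpace 𝕜 n) : ‖ofRows u‖ = √(∑ i, ‖u i‖ ^ 2) := by
  rw [← Real.sqrt_sq (norm_nonneg (ofRows u)), norm_sq_eq_sum_norm_sq_row]
  rfl

end EuclideanSpace

namespace Matrix

open EuclideanSpace

variable {𝕜 l m n : Type*} [RCLike 𝕜] [Fintype m] [Fintype n] [DecidableEq n]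

lemma specNorm_eq_l2_opNorm (M : Matrix m n 𝕜) : specNorm M = ‖M‖ := rfl

lemma norm_toEuclideanLin_apply_le (M : Matrix m n 𝕜) (v : EuclideanSpace 𝕜 n) :
    ‖toEuclideanLin M v‖ ≤ ‖M‖ * ‖v‖ :=
  (toEuclideanLin.trans LinearMap.toContinuousLinearMap M).le_opNorm v

lemma l2_opNorm_le_of_forall {M : Matrix m n 𝕜} {c : ℝ} (hc : 0 ≤ c)
    (h : ∀ v, ‖toEuclideanLin M v‖ ≤ c * ‖v‖) : ‖M‖ ≤ c :=
  ContinuousLinearMap.opNorm_le_bound _ hc h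

variable [DecidableEq m]

lemma col_toEuclideanLin_kronecker_one (M : Matrix l m 𝕜) (w : EuclideanSpace 𝕜 (m × n))
    (k : n) : (toEuclideanLin (M ⊗ₖ (1 : Matrix n n 𝕜)) w).col k = toEuclideanLin M (w.col k) := by
  ext i
  simp [EuclideanSpace.col, toLpLin_apply, mulVec, dotProduct, Fintype.sum_prod_type, one_apply]

lemma row_toEuclideanLin_one_kronecker (N : Matrix l m 𝕜) (w : EuclideanSpace 𝕜 (n × m))
    (i : n) : (toEuclideanLin ((1 : Matrix n n 𝕜) ⊗ₖ N) w).row i = toEuclideanLin N (w.row i) := by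
  ext k
  simp [EuclideanSpace.row, toLpLin_apply, mulVec, dotProduct, Fintype.sum_prod_type, one_apply]

variable [Fintype l]

lemma l2_opNorm_kronecker_one_le (M : Matrix l m 𝕜) : ‖M ⊗ₖ (1 : Matrix n n 𝕜)‖ ≤ ‖M‖ := by
  refine l2_opNorm_le_of_forall (norm_nonneg M) fun w => le_of_sq_le_sq ?_ (by positivity)
  calc ‖toEuclideanLin (M ⊗ₖ (1 : Matrix n n 𝕜)) w‖ ^ 2
      = ∑ k, ‖toEuclideanLin M (w.col k)‖ ^ 2 := by
        simp only [norm_sq_eq_sum_norm_sq_col, col_toEuclideanLin_kronecker_one]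
    _ ≤ ∑ k, (‖M‖ * ‖w.col k‖) ^ 2 := by
        gcongr with k
        exact norm_toEuclideanLin_apply_le M _
    _ = (‖M‖ * ‖w‖) ^ 2 := by
        simp only [mul_pow, ← Finset.mul_sum, ← norm_sq_eq_sum_norm_sq_col]

lemma l2_opNorm_one_kronecker_le (N : Matrix l m 𝕜) : ‖(1 : Matrix n n 𝕜) ⊗ₖ N‖ ≤ ‖N‖ := by
  refine l2_opNorm_le_of_forall (norm_nonneg N) fun w => le_of_sq_le_sq ?_ (by positivity)
  calc ‖toEuclideanLin ((1 : Matrix n n 𝕜) ⊗ₖ N) w‖ ^ 2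
      = ∑ i, ‖toEuclideanLin N (w.row i)‖ ^ 2 := by
        simp only [norm_sq_eq_sum_norm_sq_row, row_toEuclideanLin_one_kronecker]
    _ ≤ ∑ i, (‖N‖ * ‖w.row i‖) ^ 2 := by
        gcongr with i
        exact norm_toEuclideanLin_apply_le N _
    _ = (‖N‖ * ‖w‖) ^ 2 := by
        simp only [mul_pow, ← Finset.mul_sum, ← norm_sq_eq_sum_norm_sq_row]

lemma l2_opNorm_kronecker_le {p : Type*} [Fintype p] [DecidableEq p] (M : Matrix l m 𝕜)
    (N : Matrix n p 𝕜) : ‖M ⊗ₖ N‖ ≤ ‖M‖ * ‖N‖ := by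
  have hfactor : M ⊗ₖ N = (M ⊗ₖ (1 : Matrix n n 𝕜)) * ((1 : Matrix m m 𝕜) ⊗ₖ N) := by
    rw [← mul_kronecker_mul, Matrix.mul_one, Matrix.one_mul]
  rw [hfactor]
  exact (l2_opNorm_mul _ _).trans <| mul_le_mul (l2_opNorm_kronecker_one_le M)
    (l2_opNorm_one_kronecker_le N) (norm_nonneg _) (norm_nonneg _)

lemma inner_toEuclideanLin_mul [DecidableEq l] (P : Matrix l m 𝕜) (Q : Matrix m n 𝕜)
    (x : EuclideanSpace 𝕜 l) (y : EuclideanSpace 𝕜 n) :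
    inner 𝕜 x (toEuclideanLin (P * Q) y) = inner 𝕜 (toEuclideanLin Pᴴ x) (toEuclideanLin Q y) := by
  rw [toEuclideanLin_conjTranspose_eq_adjoint, LinearMap.adjoint_inner_left, toLpLin_mul]
  rfl

lemma inner_ofRows_toEuclideanLin_kronecker_one (Φ : Matrix l m 𝕜)
    (u : l → EuclideanSpace 𝕜 n) (v : m → EuclideanSpace 𝕜 n) :
    inner 𝕜 (ofRows u) (toEuclideanLin (Φ ⊗ₖ (1 : Matrix n n 𝕜)) (ofRows v)) =
      ∑ i, ∑ j, Φ i j * inner 𝕜 (u i) (v j) := by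
  simp only [ofRows, toLpLin_apply, PiLp.inner_apply, RCLike.inner_apply, mulVec, dotProduct,
    kroneckerMap_apply, one_apply, mul_ite, mul_one, mul_zero, ite_mul, zero_mul,
    Fintype.sum_prod_type, Finset.sum_ite_eq, Finset.mem_univ, ↓reduceIte, Finset.mul_sum]
  refine Finset.sum_congr rfl fun i _ => ?_
  simp only [Finset.sum_mul, mul_assoc]
  exact Finset.sum_comm

lemma norm_sum_mul_inner_le (Φ : Matrix l m 𝕜) (u : l → EuclideanSpace 𝕜 n)
    (v : m → EuclideanSpace 𝕜 n) :
    ‖∑ i, ∑ j, Φ i j * inner 𝕜 (u i) (v j)‖ ≤ ‖Φ‖ * √(∑ i, ‖u i‖ ^ 2) * √(∑ j, ‖v j‖ ^ 2) := by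
  rw [← inner_ofRows_toEuclideanLin_kronecker_one, ← norm_ofRows, ← norm_ofRows]
  calc _ ≤ ‖ofRows u‖ * ‖toEuclideanLin (Φ ⊗ₖ (1 : Matrix n n 𝕜)) (ofRows v)‖ :=
        norm_inner_le_norm _ _
    _ ≤ ‖ofRows u‖ * (‖Φ‖ * ‖ofRows v‖) := by
        gcongr
        exact (norm_toEuclideanLin_apply_le _ _).trans <|
          mul_le_mul_of_nonneg_right (l2_opNorm_kronecker_one_le Φ) (norm_nonneg _)
    _ = ‖Φ‖ * ‖ofRows u‖ * ‖ofRows v‖ := by ring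

lemma norm_sum_mul_inner_le_of_norm_le_one (Φ : Matrix l m 𝕜) {u : l → EuclideanSpace 𝕜 n}
    {v : m → EuclideanSpace 𝕜 n} (hu : ∀ i, ‖u i‖ ≤ 1) (hv : ∀ j, ‖v j‖ ≤ 1) :
    ‖∑ i, ∑ j, Φ i j * inner 𝕜 (u i) (v j)‖ ≤ √(Fintype.card l * Fintype.card m) * ‖Φ‖ :=
  calc _ ≤ ‖Φ‖ * √(∑ i, ‖u i‖ ^ 2) * √(∑ j, ‖v j‖ ^ 2) := norm_sum_mul_inner_le Φ u v
    _ ≤ ‖Φ‖ * √(Fintype.card l) * √(Fintype.card m) := by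
        gcongr
        exacts [sum_norm_sq_le_card hu, sum_norm_sq_le_card hv]
    _ = _ := by rw [Real.sqrt_mul (Nat.cast_nonneg _)]; ring

variable {a b c : Type*} [Fintype a] [Fintype b] [Fintype c] [DecidableEq a] [DecidableEq b]
  [DecidableEq c]

lemma inner_toEuclideanLin_kronecker_kronecker (A : Matrix a a 𝕜) (B : Matrix b b 𝕜)
    (C : Matrix c c 𝕜) (x y : EuclideanSpace 𝕜 ((a × b) × c)) :
    inner 𝕜 x (toEuclideanLin ((A ⊗ₖ B) ⊗ₖ C) y) =
      inner 𝕜 (toEuclideanLin ((Aᴴ ⊗ₖ (1 : Matrix b b 𝕜)) ⊗ₖ (1 : Matrix c c 𝕜)) x)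
        (toEuclideanLin (((1 : Matrix a a 𝕜) ⊗ₖ B) ⊗ₖ C) y) := by
  have hfactor : (A ⊗ₖ B) ⊗ₖ C =
      ((A ⊗ₖ (1 : Matrix b b 𝕜)) ⊗ₖ (1 : Matrix c c 𝕜)) * (((1 : Matrix a a 𝕜) ⊗ₖ B) ⊗ₖ C) := by
    rw [← mul_kronecker_mul, ← mul_kronecker_mul, one_mul, mul_one, one_mul]
  rw [hfactor, inner_toEuclideanLin_mul, conjTranspose_kronecker, conjTranspose_kronecker,
    conjTranspose_one, conjTranspose_one]

end Matrix

open Matrix in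
/-- Tripartite spectral-norm bound: for a unit vector `ψ`, local operators `A_x, B_y, C_z`
of operator norm at most `1`, and a matrix `Φ` indexed by `X × (Y × Z)`,
`|∑ Φ_{x,(y,z)} ⟨ψ, (A_x ⊗ B_y ⊗ C_z) ψ⟩| ≤ √(|X||Y||Z|)·‖Φ‖`. -/
theorem stmt16 {dA dB dC nX nY nZ : ℕ}
    (ψ : EuclideanSpace ℂ ((Fin dA × Fin dB) × Fin dC)) (hψ : ‖ψ‖ = 1)
    (A : Fin nX → Matrix (Fin dA) (Fin dA) ℂ)
    (B : Fin nY → Matrix (Fin dB) (Fin dB) ℂ)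
    (C : Fin nZ → Matrix (Fin dC) (Fin dC) ℂ)
    (hA : ∀ x, specNorm (A x) ≤ 1) (hB : ∀ y, specNorm (B y) ≤ 1)
    (hC : ∀ z, specNorm (C z) ≤ 1)
    (Φ : Matrix (Fin nX) (Fin nY × Fin nZ) ℂ) :
    ‖∑ x, ∑ y, ∑ z, Φ x (y, z) *
        (inner ℂ ψ (Matrix.toEuclideanLin (((A x) ⊗ₖ (B y)) ⊗ₖ (C z)) ψ) : ℂ)‖ ≤
      Real.sqrt ((nX : ℝ) * nY * nZ) * specNorm Φ := by
  simp only [specNorm_eq_l2_opNorm] at hA hB hC ⊢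
  set u : Fin nX → EuclideanSpace ℂ ((Fin dA × Fin dB) × Fin dC) := fun x =>
    toEuclideanLin
      (((A x)ᴴ ⊗ₖ (1 : Matrix (Fin dB) (Fin dB) ℂ)) ⊗ₖ (1 : Matrix (Fin dC) (Fin dC) ℂ)) ψ
  set v : Fin nY × Fin nZ → EuclideanSpace ℂ ((Fin dA × Fin dB) × Fin dC) := fun p =>
    toEuclideanLin (((1 : Matrix (Fin dA) (Fin dA) ℂ) ⊗ₖ B p.1) ⊗ₖ C p.2) ψ
  have hu (x : Fin nX) : ‖u x‖ ≤ 1 := by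
    refine (norm_toEuclideanLin_apply_le _ ψ).trans ?_
    rw [hψ, mul_one]
    exact (l2_opNorm_kronecker_one_le _).trans <| (l2_opNorm_kronecker_one_le _).trans <|
      (l2_opNorm_conjTranspose (A x)).trans_le (hA x)
  have hv (p : Fin nY × Fin nZ) : ‖v p‖ ≤ 1 := by
    refine (norm_toEuclideanLin_apply_le _ ψ).trans ?_
    rw [hψ, mul_one]
    exact (l2_opNorm_kronecker_le _ _).trans <|
      mul_le_one₀ ((l2_opNorm_one_kronecker_le _).trans (hB p.1)) (norm_nonneg _) (hC p.2)
  have hsum : ∑ x, ∑ y, ∑ z, Φ x (y, z) * inner ℂ ψ (toEuclideanLin ((A x ⊗ₖ B y) ⊗ₖ C z) ψ) =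
      ∑ x, ∑ p, Φ x p * inner ℂ (u x) (v p) := by
    refine Finset.sum_congr rfl fun x _ => ?_
    rw [Fintype.sum_prod_type]
    exact Finset.sum_congr rfl fun y _ => Finset.sum_congr rfl fun z _ => by
      rw [inner_toEuclideanLin_kronecker_kronecker]
  rw [hsum]
  convert norm_sum_mul_inner_le_of_norm_le_one Φ hu hv using 3
  simp [mul_assoc]
end
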